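/- Let G be a finite solvable group with trivial center. Then the following two statements are equivalent: (1) M(G) ≤ Z(F(G)), i.e., every small element of G lies in the center of the Fitting subgroup F(G); (2) [x, F(G)] is a normal subset of F(G) for every small element x of G. -/

import Mathlib

/-- The size of the conjugacy class of `x` in `G`. -/
noncomputable def classCard {G : Type*} [Group G] (x : G) : ℕ := Nat.card (conjugatesOf x)

/-- An element `x` is *small* if its conjugacy class size is among the two smallest
conjugacy class sizes of `G`, i.e. at most one conjugacy class size is strictly
smaller than that of `x`. -/
def IsSmall {G : Type*} [Group G] (x : G) : Prop :=
  {n : ℕ | (∃ g : G, classCard g = n) ∧ n < classCard x}.Subsingleton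

/-- `M G` is the subgroup generated by all small elements of `G`. -/
def smallGen (G : Type*) [Group G] : Subgroup G := Subgroup.closure {x : G | IsSmall x}

/-- `[x, K] = {x⁻¹k⁻¹xk : k ∈ K}`. -/
def commSet {G : Type*} [Group G] (x : G) (K : Set G) : Set G :=
  {y | ∃ k ∈ K, y = x⁻¹ * k⁻¹ * x * k}

/-- `[A, x] = {a⁻¹x⁻¹ax : a ∈ A}`. -/
def commSet' {G : Type*} [Group G] (A : Set G) (x : G) : Set G :=
  {y | ∃ a ∈ A, y = a⁻¹ * x⁻¹ * a * x}

/-- `S` is a normal subset of `K`: `k⁻¹Sk = S` for all `k ∈ K`. -/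
def IsNormalSubsetOf {G : Type*} [Group G] (S K : Set G) : Prop :=
  ∀ k ∈ K, (fun s => k⁻¹ * s * k) '' S = S

/-- The Fitting subgroup: the join of all nilpotent normal subgroups (for a finite
group, its largest nilpotent normal subgroup). -/
def fittingSubgroup (G : Type*) [Group G] : Subgroup G :=
  ⨆ H ∈ {H : Subgroup G | H.Normal ∧ Group.IsNilpotent ↥H}, H

/-!
`F = F(G)` is nilpotent by Fitting's theorem. If `x` is small and `[x, F]` is a normal subset of
`F`, then `S = [x, F]` is a normal subgroup of `F`. If `S = 1`, then `x` centralizes `F`, and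
`C_G(F) ≤ F` for solvable `G` gives `x ∈ Z(F)`. Otherwise `S` meets `Z(F)` in some `z ≠ 1`.
The `C_G(x)`-orbit of `z` lies in `S \ {1}`, the `F`-orbit of `x` is `x S`, and `F ≤ C_G(z)`, so
`[C_G(x) : C_G(x) ∩ C_G(z)] < |S| = [F : F ∩ C_G(x)] ≤ [C_G(z) : C_G(z) ∩ C_G(x)]`,
i.e. `|z^G| < |x^G|`. As `Z(G) = 1` also `1 < |z^G|`, contradicting the smallness of `x`.
-/

section

open Subgroup Group

section ConjugacyClassSizes

variable {G : Type*} [Group G]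

theorem ncard_image_conj (H : Subgroup G) (z : G) :
    ((fun c => c * z * c⁻¹) '' (H : Set G)).ncard = (centralizer {z}).relIndex H := by
  let _ : MulAction H G := MulAction.compHom G (MulAut.conj.comp H.subtype)
  have hsmul : ∀ (c : H) (g : G), c • g = c * g * (c : G)⁻¹ := fun _ _ => rfl
  have hstab : MulAction.stabilizer H z = (centralizer {z}).subgroupOf H := by
    ext c
    simp [MulAction.mem_stabilizer_iff, hsmul, mem_subgroupOf, mem_centralizer_singleton_iff,
      mul_inv_eq_iff_eq_mul]
  have horbit : MulAction.orbit H z = (fun c => c * z * c⁻¹) '' (H : Set G) := by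
    ext g
    simp [MulAction.mem_orbit_iff, hsmul]
  rw [relIndex, ← hstab, MulAction.index_stabilizer, horbit]

theorem classCard_eq_index (g : G) : classCard g = (centralizer {g}).index := by
  rw [← relIndex_top_right, ← ncard_image_conj, classCard, Nat.card_coe_set_eq]
  congr
  ext h
  exact isConj_iff.trans (by simp)

theorem classCard_eq_one_iff (g : G) : classCard g = 1 ↔ g ∈ center G := by
  rw [classCard_eq_index, index_eq_one, centralizer_eq_top_iff_subset, Set.singleton_subset_iff,
    SetLike.mem_coe]

theorem IsSmall.classCard_le [Finite G] (hG : center G = ⊥) {x z : G} (hx : IsSmall x)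
    (hz : z ≠ 1) : classCard x ≤ classCard z := by
  by_contra! hlt
  have hone : classCard (1 : G) = 1 := (classCard_eq_one_iff 1).2 (one_mem _)
  have hz1 : classCard z ≠ 1 := by
    rwa [Ne, classCard_eq_one_iff, hG, mem_bot]
  have hz0 : classCard z ≠ 0 := by
    rw [classCard_eq_index]
    exact index_ne_zero_of_finite
  exact hz1 (hx ⟨⟨z, rfl⟩, hlt⟩ ⟨⟨1, hone⟩, by omega⟩)

end ConjugacyClassSizes

section CommutatorSets

variable {G : Type*} [Group G]

theorem conj_mem_commSet {N : Subgroup G} [N.Normal] {x c z : G} (hc : c ∈ centralizer {x})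
    (hz : z ∈ commSet x N) : c * z * c⁻¹ ∈ commSet x N := by
  obtain ⟨k, hk, rfl⟩ := hz
  have hcx : Commute c x := mem_centralizer_singleton_iff.1 hc
  have h1 : c * x * c⁻¹ = x := by rw [hcx.eq, mul_inv_cancel_right]
  have h2 : c * x⁻¹ * c⁻¹ = x⁻¹ := by rw [hcx.inv_right.eq, mul_inv_cancel_right]
  refine ⟨c * k * c⁻¹, Normal.conj_mem ‹_› k hk c, ?_⟩
  calc c * (x⁻¹ * k⁻¹ * x * k) * c⁻¹
      = (c * x⁻¹ * c⁻¹) * (c * k * c⁻¹)⁻¹ * (c * x * c⁻¹) * (c * k * c⁻¹) := by group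
    _ = x⁻¹ * (c * k * c⁻¹)⁻¹ * x * (c * k * c⁻¹) := by rw [h1, h2]

theorem image_conj_eq_image_mul_commSet (N : Subgroup G) (x : G) :
    (fun c => c * x * c⁻¹) '' (N : Set G) = (x * ·) '' commSet x N := by
  ext g
  constructor
  · rintro ⟨c, hc, rfl⟩
    exact ⟨_, ⟨c⁻¹, inv_mem hc, rfl⟩, by group⟩
  · rintro ⟨_, ⟨k, hk, rfl⟩, rfl⟩
    exact ⟨k⁻¹, inv_mem hk, by group⟩

theorem ncard_commSet (N : Subgroup G) (x : G) :
    (commSet x N).ncard = (centralizer {x}).relIndex N := by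
  rw [← ncard_image_conj, image_conj_eq_image_mul_commSet,
    Set.ncard_image_of_injective _ (mul_right_injective x)]

theorem classCard_lt_of_mem_commSet [Finite G] {N : Subgroup G} [N.Normal] {x z : G}
    (hz : z ∈ commSet x N) (hz1 : z ≠ 1) (hNz : N ≤ centralizer {z}) :
    classCard z < classCard x := by
  set Cx := centralizer {x}
  set Cz := centralizer {z}
  have horbit : (fun c => c * z * c⁻¹) '' (Cx : Set G) ⊆ commSet x N \ {1} := by
    rintro _ ⟨c, hc, rfl⟩
    exact ⟨conj_mem_commSet hc hz, fun h => hz1 (conj_eq_one_iff.1 h)⟩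
  have hone : (1 : G) ∈ commSet x N := ⟨1, one_mem N, by group⟩
  have hlt : Cz.relIndex Cx < Cx.relIndex Cz := calc
    Cz.relIndex Cx = ((fun c => c * z * c⁻¹) '' (Cx : Set G)).ncard := (ncard_image_conj Cx z).symm
    _ ≤ (commSet x N \ {1}).ncard := Set.ncard_le_ncard horbit (Set.toFinite _)
    _ < (commSet x N).ncard := Set.ncard_sdiff_singleton_lt_of_mem hone (Set.toFinite _)
    _ = Cx.relIndex N := ncard_commSet N x
    _ ≤ Cx.relIndex Cz := relIndex_le_of_le_right hNz index_ne_zero_of_finite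
  have hprod : Cx.relIndex Cz * Cz.index = Cz.relIndex Cx * Cx.index := by
    rw [← inf_relIndex_right, relIndex_mul_index inf_le_right, ← inf_relIndex_right Cz Cx,
      relIndex_mul_index inf_le_right, inf_comm]
  have hx : 0 < Cx.index := Nat.pos_of_ne_zero index_ne_zero_of_finite
  rw [classCard_eq_index, classCard_eq_index]
  nlinarith

def commSubgroup {N : Subgroup G} {x : G} (h : IsNormalSubsetOf (commSet x N) N) :
    Subgroup G where
  carrier := commSet x N
  one_mem' := ⟨1, one_mem N, by group⟩
  mul_mem' := by
    rintro _ b ⟨l, hl, rfl⟩ hb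
    rw [← h l hl] at hb
    obtain ⟨_, ⟨k, hk, rfl⟩, rfl⟩ := hb
    exact ⟨k * l, mul_mem hk hl, by group⟩
  inv_mem' := by
    rintro _ ⟨l, hl, rfl⟩
    rw [← h l hl]
    exact ⟨_, ⟨l⁻¹, inv_mem hl, rfl⟩, by group⟩

theorem commSubgroup_le {N : Subgroup G} [N.Normal] {x : G}
    (h : IsNormalSubsetOf (commSet x N) N) : commSubgroup h ≤ N := by
  rintro _ ⟨k, hk, rfl⟩
  exact mul_mem (by simpa using Normal.conj_mem inferInstance _ (inv_mem hk) x⁻¹) hk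

theorem normal_commSubgroup_subgroupOf {N : Subgroup G} {x : G}
    (h : IsNormalSubsetOf (commSet x N) N) : ((commSubgroup h).subgroupOf N).Normal := by
  refine ⟨fun s hs k => ?_⟩
  rw [mem_subgroupOf] at hs ⊢
  change _ ∈ commSet x N
  rw [← h _ (inv_mem k.2)]
  exact ⟨s, hs, by simp⟩

theorem commSet_eq_one_iff {N : Subgroup G} {x : G} :
    commSet x N = {1} ↔ x ∈ centralizer (N : Set G) := by
  constructor
  · refine fun h => mem_centralizer_iff.2 fun k hk => ?_
    have hxk : x⁻¹ * k⁻¹ * x * k = 1 := by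
      rw [← Set.mem_singleton_iff, ← h]
      exact ⟨k, hk, rfl⟩
    calc k * x = k * x * (x⁻¹ * k⁻¹ * x * k) := by rw [hxk, mul_one]
      _ = x * k := by group
  · refine fun hx => Set.eq_singleton_iff_unique_mem.2 ⟨⟨1, one_mem N, by group⟩, ?_⟩
    rintro _ ⟨k, hk, rfl⟩
    rw [mul_assoc _ x, ← mem_centralizer_iff.1 hx k hk]
    group

theorem isNormalSubsetOf_one (K : Set G) : IsNormalSubsetOf {1} K := fun k _ => by simp

theorem mem_map_subtype_center_iff {N : Subgroup G} {x : G} :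
    x ∈ (center N).map N.subtype ↔ x ∈ N ∧ x ∈ centralizer (N : Set G) := by
  constructor
  · rintro ⟨y, hy, rfl⟩
    exact ⟨y.2, fun k hk => congrArg Subtype.val (mem_center_iff.1 hy ⟨k, hk⟩)⟩
  · rintro ⟨hxN, hxC⟩
    exact ⟨⟨x, hxN⟩, mem_center_iff.2 fun k => Subtype.ext (hxC k k.2), rfl⟩

end CommutatorSets

open scoped commutatorElement in
theorem Subgroup.Normal.inf_center_ne_bot {H : Type*} [Group H] [IsNilpotent H]
    {N : Subgroup H} (hN : N.Normal) (hN1 : N ≠ ⊥) : N ⊓ center H ≠ ⊥ := by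
  -- the first term of the upper central series meeting `N` meets it inside the center
  have key : ∀ k, N ⊓ upperCentralSeries H k ≠ ⊥ → N ⊓ center H ≠ ⊥ := by
    intro k
    induction k with
    | zero => simp [Subgroup.upperCentralSeries_zero]
    | succ k ih =>
      intro hk
      by_cases hk' : N ⊓ upperCentralSeries H k = ⊥
      · refine ne_bot_of_le_ne_bot hk (le_inf inf_le_left fun x hx => ?_)
        obtain ⟨hxN, hxζ⟩ := mem_inf.1 hx
        refine mem_center_iff.2 fun y => ?_
        have hxyN : ⁅x, y⁆ ∈ N := by
          simpa [commutatorElement_def, mul_assoc] using mul_mem hxN (hN.conj_mem _ (inv_mem hxN) y)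
        have hcomm : ⁅x, y⁆ ∈ N ⊓ upperCentralSeries H k :=
          ⟨hxyN, Subgroup.mem_upperCentralSeries_succ_iff.1 hxζ y⟩
        rw [hk', mem_bot, commutatorElement_eq_one_iff_mul_comm] at hcomm
        exact hcomm.symm
      · exact ih hk'
  obtain ⟨n, hn⟩ := IsNilpotent.nilpotent H
  exact key n (by rwa [hn, inf_top_eq])

section Fitting

theorem Sylow.not_dvd_relIndex_of_map_subtype_le {J : Type*} [Group J] [Finite J] {p : ℕ}
    [Fact p.Prime] {A M : Subgroup J} (R : Sylow p A) (hR : (R : Subgroup A).map A.subtype ≤ M) :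
    ¬ p ∣ M.relIndex A := by
  have hR_index : ((R : Subgroup A).map A.subtype).relIndex A = (R : Subgroup A).index := by
    rw [relIndex, ← comap_subtype, comap_map_eq_self_of_injective A.subtype_injective]
  exact fun hdvd => R.not_dvd_index (hdvd.trans (hR_index ▸ relIndex_dvd_of_le_left A hR))

theorem isNilpotent_of_sup_eq_top {J : Type*} [Group J] [Finite J] {H K : Subgroup J}
    [H.Normal] [K.Normal] [IsNilpotent H] [IsNilpotent K] (hHK : H ⊔ K = ⊤) :
    IsNilpotent J := by
  refine (Group.isNilpotent_of_finite_tfae.out 0 3).2 ?_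
  intro p hp L
  obtain ⟨P⟩ : Nonempty (Sylow p H) := inferInstance
  obtain ⟨Q⟩ : Nonempty (Sylow p K) := inferInstance
  have := P.characteristic_of_normal inferInstance
  have := Q.characteristic_of_normal inferInstance
  set N := (P : Subgroup H).map H.subtype ⊔ (Q : Subgroup K).map K.subtype
  have hN : IsPGroup p N := (P.isPGroup'.map _).to_sup_of_normal_left (Q.isPGroup'.map _)
  -- `N` is a normal `p`-subgroup of `p'`-index, hence the only Sylow `p`-subgroup of `J`
  have hindex : ¬ p ∣ N.index := by
    have htop : H ⊔ (N ⊔ K) = ⊤ := top_le_iff.1 (hHK ▸ sup_le_sup_left le_sup_right H)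
    rw [← relIndex_mul_index (le_sup_left : N ≤ N ⊔ K), relIndex_sup_left]
    have hindex_sup : (N ⊔ K).index = (N ⊔ K).relIndex H := by
      rw [← relIndex_sup_right, htop, relIndex_top_right]
    rw [hindex_sup]
    exact hp.out.not_dvd_mul (Q.not_dvd_relIndex_of_map_subtype_le le_sup_right)
      (P.not_dvd_relIndex_of_map_subtype_le (le_sup_left.trans le_sup_left))
  rw [(hN.toSylow hindex).is_maximal' L.isPGroup' (hN.le_sylow_of_normal L)]
  exact inferInstanceAs N.Normal

variable {G : Type*} [Group G]

theorem isNilpotent_sup [Finite G] {A B : Subgroup G} [A.Normal] [B.Normal] [IsNilpotent A]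
    [IsNilpotent B] : IsNilpotent ↥(A ⊔ B) := by
  have : IsNilpotent (A.subgroupOf (A ⊔ B)) :=
    Group.nilpotent_of_mulEquiv (subgroupOfEquivOfLe le_sup_left).symm
  have : IsNilpotent (B.subgroupOf (A ⊔ B)) :=
    Group.nilpotent_of_mulEquiv (subgroupOfEquivOfLe le_sup_right).symm
  exact isNilpotent_of_sup_eq_top (H := A.subgroupOf (A ⊔ B)) (K := B.subgroupOf (A ⊔ B))
    (codisjoint_iff.1 (codisjoint_subgroupOf_sup A B))

theorem le_fittingSubgroup {H : Subgroup G} (hH : H.Normal) (hHn : IsNilpotent H) :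
    H ≤ fittingSubgroup G :=
  le_iSup₂_of_le H ⟨hH, hHn⟩ le_rfl

theorem fittingSubgroup_normal_and_isNilpotent [Finite G] :
    (fittingSubgroup G).Normal ∧ IsNilpotent (fittingSubgroup G) := by
  have hfin := Set.toFinite {H : Subgroup G | H.Normal ∧ IsNilpotent H}
  rw [fittingSubgroup, ← sSup_eq_iSup, ← hfin.coe_toFinset, ← Finset.sup_id_eq_sSup]
  refine Finset.sup_induction ⟨inferInstance, inferInstance⟩ ?_ fun H hH => hfin.mem_toFinset.1 hH
  rintro A ⟨hA, hAn⟩ B ⟨hB, hBn⟩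
  exact ⟨sup_normal A B, isNilpotent_sup⟩

instance fittingSubgroup_normal [Finite G] : (fittingSubgroup G).Normal :=
  fittingSubgroup_normal_and_isNilpotent.1

instance isNilpotent_fittingSubgroup [Finite G] : IsNilpotent (fittingSubgroup G) :=
  fittingSubgroup_normal_and_isNilpotent.2

theorem isNilpotent_of_commutator_le_centralizer {D : Subgroup G}
    (h : ⁅D, D⁆ ≤ centralizer (D : Set G)) : IsNilpotent D := by
  refine ⟨2, eq_top_iff.2 fun x _ => Subgroup.mem_upperCentralSeries_succ_iff.2 fun y => ?_⟩
  rw [Subgroup.upperCentralSeries_one, mem_center_iff]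
  exact fun w => Subtype.ext (h (commutator_mem_commutator x.2 y.2) w w.2)

theorem le_fittingSubgroup_of_commutator_le {D : Subgroup G} [D.Normal]
    (hD : D ≤ centralizer (fittingSubgroup G : Set G)) (hDD : ⁅D, D⁆ ≤ fittingSubgroup G) :
    D ≤ fittingSubgroup G := by
  refine le_fittingSubgroup inferInstance (isNilpotent_of_commutator_le_centralizer ?_)
  exact fun c hc d hd => (mem_centralizer_iff.1 (hD hd) c (hDD hc)).symm

theorem centralizer_fittingSubgroup_le [Finite G] (hG : Group.IsSolvable G) :
    centralizer (fittingSubgroup G : Set G) ≤ fittingSubgroup G := by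
  set C := centralizer (fittingSubgroup G : Set G)
  let D : ℕ → Subgroup G := fun m => (fun M => ⁅M, M⁆)^[m] C
  have hD_succ : ∀ m, D (m + 1) = ⁅D m, D m⁆ := fun m => Function.iterate_succ_apply' _ m C
  have hD_normal : ∀ m, (D m).Normal := by
    intro m
    induction m with
    | zero => exact normal_centralizer
    | succ m ih => rw [hD_succ]; infer_instance
  have hD_le : ∀ m, D m ≤ C ⊓ derivedSeries G m := by
    intro m
    induction m with
    | zero => exact le_inf le_rfl le_top
    | succ m ih =>
      rw [hD_succ, derivedSeries_succ]
      exact le_inf ((commutator_le_left _ _).trans (ih.trans inf_le_left))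
        (commutator_mono (ih.trans inf_le_right) (ih.trans inf_le_right))
  obtain ⟨n, hn⟩ := hG.solvable
  -- downward along the derived series of `C`: once `⁅D, D⁆ ≤ F`, `D` has class at most 2
  have hD_fitting : D 0 ≤ fittingSubgroup G := by
    refine Nat.decreasingInduction (motive := fun m _ => D m ≤ fittingSubgroup G) ?_
      ((hD_le n).trans (inf_le_right.trans (hn ▸ bot_le))) n.zero_le
    intro k _ ih
    have := hD_normal k
    exact le_fittingSubgroup_of_commutator_le ((hD_le k).trans inf_le_left) (hD_succ k ▸ ih)
  exact hD_fitting

end Fitting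


theorem mem_map_center_fittingSubgroup_of_isSmall {G : Type*} [Group G] [Finite G]
    (hG : Group.IsSolvable G) (hZ : center G = ⊥) {x : G} (hx : IsSmall x)
    (hxF : IsNormalSubsetOf (commSet x (fittingSubgroup G)) (fittingSubgroup G)) :
    x ∈ (center (fittingSubgroup G)).map (fittingSubgroup G).subtype := by
  set F := fittingSubgroup G
  set S := commSubgroup hxF
  by_cases hS : S = ⊥
  · have hxC : x ∈ centralizer (F : Set G) := commSet_eq_one_iff.1 (by rw [← coe_bot, ← hS]; rfl)
    exact mem_map_subtype_center_iff.2 ⟨centralizer_fittingSubgroup_le hG hxC, hxC⟩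
  · have hSF : S.subgroupOf F ≠ ⊥ := fun h =>
      hS (disjoint_self.1 ((subgroupOf_eq_bot.1 h).mono_right (commSubgroup_le hxF)))
    obtain ⟨⟨z, hzS, hzZ⟩, hz1⟩ :=
      ne_bot_iff_exists_ne_one.1 ((normal_commSubgroup_subgroupOf hxF).inf_center_ne_bot hSF)
    have hzG : (z : G) ≠ 1 := fun h => hz1 (Subtype.ext (Subtype.ext h))
    have hFz : F ≤ centralizer {(z : G)} := fun k hk =>
      mem_centralizer_singleton_iff.2 (congrArg Subtype.val (mem_center_iff.1 hzZ ⟨k, hk⟩))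
    exact absurd (classCard_lt_of_mem_commSet hzS hzG hFz) (not_lt.2 (hx.classCard_le hZ hzG))

end

/-- For a finite solvable group `G` with trivial center, the following are equivalent:
(1) `M(G) ≤ Z(F(G))`; (2) `[x, F(G)]` is a normal subset of `F(G)` for all small `x`. -/
theorem stmt_10 {G : Type*} [Group G] [Finite G] (hsolv : IsSolvable G)
    (hz : Subgroup.center G = ⊥) :
    smallGen G ≤ (Subgroup.center ↥(fittingSubgroup G)).map (fittingSubgroup G).subtype ↔
    ∀ x : G, IsSmall x →
      IsNormalSubsetOf (commSet x (fittingSubgroup G : Set G)) (fittingSubgroup G : Set G) := by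
  refine ⟨fun h x hx => ?_, fun h => ?_⟩
  · have hxZ := mem_map_subtype_center_iff.1 (h (Subgroup.subset_closure hx))
    rw [commSet_eq_one_iff.2 hxZ.2]
    exact isNormalSubsetOf_one _
  · exact (Subgroup.closure_le _).2 fun x hx =>
      mem_map_center_fittingSubgroup_of_isSmall hsolv hz hx (h x hx)
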